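/- arXiv:1305.5669 — 3 statements merged into one kernel-verified Lean document; each statement's English description precedes it below -/
import Mathlib

section
/- For every natural number m and every real θ with cos θ ≠ 0 and sin θ ≠ 0, S_{2m}(−1, 1, −5, 2; cos θ) = (−1)^m · sin((2m+2)θ) / ((2m+2) · cos θ · sin θ). -/
/-!
Put `j = m - k` and `x = cos θ`. The `k`-th term of `(m + 1) S_{2m}(x)` is
`C(m + j + 1, 2j + 1) (-4x²)^j`, so `(m + 1) S_{2m}(x) = B_m(-4x²)` for the Morgan–Voyce
polynomial `B_m(z) = ∑ C(m + j + 1, 2j + 1) z^j`. Pascal's rule gives `B_m` the recurrence of the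
Chebyshev polynomials `U_m` after the substitution `z = 2(y - 1)`, hence `B_m(2(y - 1)) = U_m(y)`.
At `y = -cos 2θ` this reads `(m + 1) S_{2m}(cos θ) = U_m(-cos 2θ) = (-1)^m sin((2m + 2)θ) / sin 2θ`.
-/

open Finset Real MeasureTheory

/-- The basic class of symmetric orthogonal polynomials `S_n(p,q,r,s;x)`. -/
noncomputable def S (p q r s : ℝ) (n : ℕ) (x : ℝ) : ℝ :=
  ∑ k ∈ Finset.range (n / 2 + 1),
    (Nat.choose (n / 2) k : ℝ) *
      (∏ i ∈ Finset.range (n / 2 - k),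
        ((2 * (i : ℝ) + (-1 : ℝ) ^ (n + 1) + 2 * ((n / 2 : ℕ) : ℝ)) * p + r) /
        ((2 * (i : ℝ) + (-1 : ℝ) ^ (n + 1) + 2) * q + s)) *
      x ^ (n - 2 * k)

/-- The monic normalization `S̄_n(p,q,r,s;x)`. -/
noncomputable def Sbar (p q r s : ℝ) (n : ℕ) (x : ℝ) : ℝ :=
  (∏ i ∈ Finset.range (n / 2),
    ((2 * (i : ℝ) + (-1 : ℝ) ^ (n + 1) + 2) * q + s) /
    ((2 * (i : ℝ) + (-1 : ℝ) ^ (n + 1) + 2 * ((n / 2 : ℕ) : ℝ)) * p + r)) *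
    S p q r s n x

theorem Nat.choose_add_two_add_choose (n k : ℕ) :
    (n + 2).choose (k + 2) + n.choose (k + 2) = 2 * (n + 1).choose (k + 2) + n.choose k := by
  have h₂ : (n + 2).choose (k + 2) = (n + 1).choose (k + 1) + (n + 1).choose (k + 2) :=
    Nat.choose_succ_succ' (n + 1) (k + 1)
  have h₁ := Nat.choose_succ_succ' n k
  have h₀ : (n + 1).choose (k + 2) = n.choose (k + 1) + n.choose (k + 2) :=
    Nat.choose_succ_succ' n (k + 1)
  omega

namespace Polynomial

noncomputable def morganVoyceB (R : Type*) [Semiring R] (n : ℕ) : R[X] :=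
  ∑ k ∈ range (n + 1), C ((n + k + 1).choose (2 * k + 1) : R) * X ^ k

variable (R : Type*)

theorem coeff_morganVoyceB [Semiring R] (n k : ℕ) :
    (morganVoyceB R n).coeff k = (n + k + 1).choose (2 * k + 1) := by
  simp only [morganVoyceB, finsetSum_coeff, coeff_C_mul_X_pow, sum_ite_eq, mem_range]
  split_ifs with hk
  · rfl
  · rw [Nat.choose_eq_zero_of_lt (by omega), Nat.cast_zero]

theorem morganVoyceB_add_two_add [CommSemiring R] (n : ℕ) :
    morganVoyceB R (n + 2) + morganVoyceB R n = (2 + X) * morganVoyceB R (n + 1) := by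
  ext k
  rw [coeff_add, add_mul, coeff_add, coeff_ofNat_mul]
  rcases k with _ | k
  · simp only [coeff_morganVoyceB, coeff_X_mul_zero, mul_zero, add_zero, zero_add,
      Nat.choose_one_right]
    push_cast
    ring
  · simp only [coeff_morganVoyceB, coeff_X_mul]
    have := congrArg (Nat.cast (R := R)) (Nat.choose_add_two_add_choose (n + k + 2) (2 * k + 1))
    push_cast at this
    ring_nf at this ⊢
    exact this

theorem U_eq_morganVoyceB_comp [CommRing R] (n : ℕ) :
    Chebyshev.U R n = (morganVoyceB R n).comp (2 * (X - 1)) := by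
  induction n using Nat.twoStepInduction with
  | zero => simp [morganVoyceB]
  | one =>
    simp only [morganVoyceB, sum_range_succ, range_one, sum_singleton, map_natCast, Nat.cast_one,
      Chebyshev.U_one]
    norm_num
    ring
  | more n ih0 ih1 =>
    rw [eq_sub_of_add_eq (morganVoyceB_add_two_add R n), sub_comp, mul_comp, ← ih0, ← ih1]
    push_cast
    rw [Chebyshev.U_add_two, add_comp, ofNat_comp, X_comp]
    ring

end Polynomial

open Polynomial

theorem succ_mul_choose_mul_prod (m j : ℕ) :
    ((m : ℝ) + 1) * m.choose j * ∏ i ∈ range j, (-2 * ((i : ℝ) + m + 2) / (2 * i + 3)) =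
      (-4) ^ j * (m + j + 1).choose (2 * j + 1) := by
  induction j with
  | zero => simp
  | succ j ih =>
    -- Both sides get multiplied by `-2 (m - j) (m + j + 2) / ((j + 1) (2j + 3))`.
    have hm : (m.choose (j + 1) : ℝ) * (j + 1) = m.choose j * (m - j : ℕ) := by
      exact_mod_cast Nat.choose_succ_right_eq m j
    have hN : ((m + j + 2).choose (2 * j + 3) : ℝ) * (2 * j + 3) * (2 * j + 2) =
        (m + j + 2) * (m + j + 1).choose (2 * j + 1) * (m - j : ℕ) := by
      have h : (m + j + 2).choose (2 * j + 3) * (2 * j + 3) =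
          (m + j + 2).choose (2 * j + 2) * (m - j) := by
        rw [Nat.choose_succ_right_eq, show m + j + 2 - (2 * j + 2) = m - j by omega]
      have : (m + j + 2).choose (2 * j + 3) * (2 * j + 3) * (2 * j + 2) =
          (m + j + 2) * (m + j + 1).choose (2 * j + 1) * (m - j) := by
        rw [h, Nat.add_one_mul_choose_eq]; ring
      exact_mod_cast this
    rw [prod_range_succ, show m + (j + 1) + 1 = m + j + 2 by ring,
      show 2 * (j + 1) + 1 = 2 * j + 3 by ring]
    set P := ∏ i ∈ range j, (-2 * ((i : ℝ) + m + 2) / (2 * i + 3))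
    set t := -2 * ((j : ℝ) + m + 2) / (2 * j + 3)
    have ht : t * (2 * j + 3) = -2 * ((j : ℝ) + m + 2) := div_mul_cancel₀ _ (by positivity)
    apply mul_right_cancel₀ (b := ((j : ℝ) + 1) * (2 * j + 3) * (2 * j + 2)) (by positivity)
    linear_combination ((m : ℝ) + 1) * P * t * (2 * j + 3) * (2 * j + 2) * hm
      + ((m - j : ℕ) : ℝ) * t * (2 * j + 3) * (2 * j + 2) * ih
      + (-4) ^ j * ((m + j + 1).choose (2 * j + 1) : ℝ) * ((m - j : ℕ) : ℝ) * (2 * j + 2) * ht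
      - (-4) ^ (j + 1) * ((j : ℝ) + 1) * hN

theorem succ_mul_S_sixth_kind_even (m : ℕ) (x : ℝ) :
    ((m : ℝ) + 1) * S (-1) 1 (-5) 2 (2 * m) x = (morganVoyceB ℝ m).eval (-4 * x ^ 2) := by
  have hpow : (-1 : ℝ) ^ (2 * m + 1) = -1 := by simp [pow_succ, pow_mul]
  rw [S, Nat.mul_div_cancel_left m two_pos, mul_sum, morganVoyceB, eval_finsetSum,
    ← sum_range_reflect]
  refine sum_congr rfl fun k hk => ?_
  obtain ⟨j, rfl⟩ := Nat.exists_eq_add_of_le' (Nat.lt_succ_iff.mp (mem_range.mp hk))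
  have hfactor (i : ℕ) : ((2 * (i : ℝ) + -1 + 2 * ((j + k : ℕ) : ℝ)) * -1 + -5) /
      ((2 * (i : ℝ) + -1 + 2) * 1 + 2) = -2 * ((i : ℝ) + (j + k : ℕ) + 2) / (2 * i + 3) := by
    ring
  rw [show j + k + 1 - 1 - k = j by omega, Nat.add_sub_cancel_left,
    show 2 * (j + k) - 2 * j = 2 * k by omega, Nat.choose_symm_add, hpow]
  simp only [hfactor]
  rw [eval_C_mul, eval_pow, eval_X, ← mul_assoc, ← mul_assoc, succ_mul_choose_mul_prod, mul_pow,
    pow_mul]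
  ring

/-- Half-trigonometric form of the even-degree Chebyshev polynomials of the sixth kind:
`S_{2m}(−1,1,−5,2;cos θ) = (−1)^m sin((2m+2)θ)/((2m+2)cos θ sin θ)`. -/
theorem sixth_kind_chebyshev_trig_form (m : ℕ) (θ : ℝ)
    (hc : Real.cos θ ≠ 0) (hs : Real.sin θ ≠ 0) :
    S (-1) 1 (-5) 2 (2 * m) (Real.cos θ) =
      (-1 : ℝ) ^ m * Real.sin ((2 * (m : ℝ) + 2) * θ) /
        ((2 * (m : ℝ) + 2) * Real.cos θ * Real.sin θ) := by
  have hS : ((m : ℝ) + 1) * S (-1) 1 (-5) 2 (2 * m) (cos θ) =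
      (-1) ^ m * (Chebyshev.U ℝ m).eval (cos (2 * θ)) := by
    rw [succ_mul_S_sixth_kind_even,
      show -4 * cos θ ^ 2 = 2 * (-cos (2 * θ) - 1) by rw [cos_two_mul]; ring,
      ← Int.cast_negOnePow_natCast, ← Chebyshev.U_eval_neg, U_eq_morganVoyceB_comp, eval_comp]
    simp only [eval_mul, eval_sub, eval_X, eval_one, eval_ofNat]
  have hU := Chebyshev.U_real_cos (2 * θ) m
  rw [sin_two_mul, show ((m : ℤ) + 1 : ℝ) * (2 * θ) = (2 * m + 2) * θ by push_cast; ring] at hU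
  rw [eq_div_iff (mul_ne_zero (mul_ne_zero (by positivity) hc) hs)]
  linear_combination (2 * cos θ * sin θ) * hS + (-1) ^ m * hU
end

section
/- For every natural number n ≥ 1 and every real x, the Chebyshev polynomial of the first kind satisfies T_n(x) = 2^{n−1} · S̄_n(−1, 1, −1, 0; x). -/
/-!
Both sides are polynomials of degree `n` and parity `n` whose coefficients `c k` of `x ^ (n - 2 k)`
satisfy the same first-order recurrence `4 (k + 1) (n - k - 1) c (k + 1) = -(n - 2 k) (n - 2 k - 1) c k`
and share the leading coefficient `2 ^ (n - 1)`. For `T_n` the recurrence is read off the Chebyshev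
differential equation `(1 - x²) T'' = x T' - n² T`, which also kills the coefficients of the wrong
parity. For `S̄_n` it comes from peeling one factor off the product in `S`, after writing
`(-1) ^ (n + 1) = 2 (n % 2) - 1`.
-/

open Finset Real MeasureTheory

namespace Polynomial

theorem eval_eq_sum_range_sub_two_mul {R : Type*} [CommSemiring R] {p : R[X]} {n : ℕ}
    (hdeg : p.natDegree ≤ n) (hodd : ∀ j, Odd (n - j) → p.coeff j = 0) (x : R) :
    p.eval x = ∑ k ∈ range (n / 2 + 1), p.coeff (n - 2 * k) * x ^ (n - 2 * k) := by
  have hinj : Set.InjOn (fun k => n - 2 * k) (range (n / 2 + 1)) := by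
    intro a ha b hb hab
    simp only [coe_range, Set.mem_Iio] at ha hb hab
    omega
  rw [eval_eq_sum_range' (Nat.lt_succ_of_le hdeg),
    ← sum_image (f := fun j => p.coeff j * x ^ j) hinj]
  symm
  apply sum_subset
  · intro j hj
    simp only [mem_image, mem_range] at hj ⊢
    omega
  · intro j hj hnot
    have hj_odd : Odd (n - j) := by
      by_contra heven
      obtain ⟨d, hd⟩ := Nat.not_odd_iff_even.1 heven
      simp only [mem_image, mem_range, not_exists, not_and] at hj hnot
      exact hnot d (by omega) (by omega)
    simp [hodd j hj_odd]

variable {R : Type*} [CommRing R]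

theorem coeff_X_mul_derivative (p : R[X]) (j : ℕ) :
    (X * derivative p).coeff j = j * p.coeff j := by
  rcases j with _ | j
  · simp
  · rw [coeff_X_mul, coeff_derivative, mul_comm, Nat.cast_succ]

theorem coeff_X_sq_mul_derivative_derivative (p : R[X]) (j : ℕ) :
    (X ^ 2 * derivative (derivative p)).coeff j = j * (j - 1) * p.coeff j := by
  have h : X ^ 2 * derivative (derivative p) =
      X * derivative (X * derivative p) - X * derivative p := by
    rw [derivative_mul, derivative_X]
    ring
  rw [h, coeff_sub, coeff_X_mul_derivative, coeff_X_mul_derivative]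
  ring

namespace Chebyshev

theorem coeff_T_add_two (n : ℤ) (j : ℕ) :
    ((j : R) + 2) * ((j : R) + 1) * (T R n).coeff (j + 2) =
      ((j : R) ^ 2 - (n : R) ^ 2) * (T R n).coeff j := by
  have hode := one_sub_X_sq_mul_derivative_derivative_T_eq_poly_in_T (R := R) n
  rw [show (n : R[X]) ^ 2 = Polynomial.C ((n : R) ^ 2) by simp, Function.iterate_succ_apply,
    Function.iterate_one, sub_mul, one_mul] at hode
  have h := congr_arg (coeff · j) hode
  simp only [coeff_sub, coeff_C_mul, coeff_X_mul_derivative, coeff_X_sq_mul_derivative_derivative,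
    coeff_derivative] at h
  push_cast at h
  linear_combination h

theorem coeff_T_eq_zero_of_odd [IsDomain R] [CharZero R] {n j : ℕ} (h : Odd (n - j)) :
    (T R n).coeff j = 0 := by
  have step : ∀ j, j < n → (T R n).coeff (j + 2) = 0 → (T R n).coeff j = 0 := by
    intro j hj h2
    have hrec := coeff_T_add_two (R := R) n j
    rw [h2, mul_zero, Int.cast_natCast, sq_sub_sq, eq_comm] at hrec
    refine (mul_eq_zero.1 hrec).resolve_left (mul_ne_zero ?_ ?_)
    · exact_mod_cast (show j + n ≠ 0 by omega)
    · exact sub_ne_zero.2 (Nat.cast_injective.ne hj.ne)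
  obtain ⟨d, hd⟩ := h
  induction d generalizing j with
  | zero =>
    refine step j (by omega) (coeff_eq_zero_of_natDegree_lt ?_)
    simp only [natDegree_T, Int.natAbs_natCast]
    omega
  | succ d ih => exact step j (by omega) (ih (j := j + 2) (by omega))

end Chebyshev

end Polynomial

theorem neg_one_pow_succ_eq_two_mul_mod_two_sub_one {R : Type*} [Ring R] (n : ℕ) :
    (-1 : R) ^ (n + 1) = 2 * (n % 2 : ℕ) - 1 := by
  rw [pow_succ, neg_one_pow_eq_pow_mod_two]
  rcases Nat.mod_two_eq_zero_or_one n with h | h <;> norm_num [h]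

namespace S

def numFactor (p r : ℝ) (n i : ℕ) : ℝ :=
  (2 * (i : ℝ) + (-1 : ℝ) ^ (n + 1) + 2 * ((n / 2 : ℕ) : ℝ)) * p + r

def denFactor (q s : ℝ) (n i : ℕ) : ℝ :=
  (2 * (i : ℝ) + (-1 : ℝ) ^ (n + 1) + 2) * q + s

theorem numFactor_chebyshev (n i : ℕ) :
    numFactor (-1) (-1) n i = -2 * (i + (n / 2 : ℕ) + (n % 2 : ℕ)) := by
  rw [numFactor, neg_one_pow_succ_eq_two_mul_mod_two_sub_one]
  ring

theorem denFactor_chebyshev (n i : ℕ) : denFactor 1 0 n i = 2 * (i + (n % 2 : ℕ)) + 1 := by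
  rw [denFactor, neg_one_pow_succ_eq_two_mul_mod_two_sub_one]
  ring

end S

open S

namespace Sbar

variable (p q r s : ℝ) (n : ℕ)

noncomputable def coeff (k : ℕ) : ℝ :=
  (∏ i ∈ range (n / 2), denFactor q s n i / numFactor p r n i) *
    ((n / 2).choose k * ∏ i ∈ range (n / 2 - k), numFactor p r n i / denFactor q s n i)

theorem eq_sum_coeff (x : ℝ) :
    Sbar p q r s n x = ∑ k ∈ range (n / 2 + 1), coeff p q r s n k * x ^ (n - 2 * k) := by
  rw [Sbar, S, mul_sum]
  refine sum_congr rfl fun k _ => ?_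
  simp only [coeff, numFactor, denFactor]
  ring

theorem coeff_zero (h : ∀ i < n / 2, numFactor p r n i ≠ 0 ∧ denFactor q s n i ≠ 0) :
    coeff p q r s n 0 = 1 := by
  rw [coeff, Nat.choose_zero_right, Nat.cast_one, one_mul, Nat.sub_zero, ← prod_mul_distrib]
  refine prod_eq_one fun i hi => ?_
  obtain ⟨hnum, hden⟩ := h i (mem_range.1 hi)
  field_simp

theorem coeff_succ {k : ℕ} (hk : k < n / 2) :
    (k + 1) * coeff p q r s n (k + 1) *
        (numFactor p r n (n / 2 - (k + 1)) / denFactor q s n (n / 2 - (k + 1))) =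
      ((n / 2 - k : ℕ) : ℝ) * coeff p q r s n k := by
  have hsplit : n / 2 - k = n / 2 - (k + 1) + 1 := by omega
  have hchoose : ((n / 2).choose (k + 1) : ℝ) * (k + 1) =
      (n / 2).choose k * ((n / 2 - (k + 1) + 1 : ℕ) : ℝ) := by
    rw [← hsplit]
    exact_mod_cast Nat.choose_succ_right_eq (n / 2) k
  rw [coeff, coeff, hsplit, prod_range_succ]
  linear_combination (∏ i ∈ range (n / 2), denFactor q s n i / numFactor p r n i) *
    (∏ i ∈ range (n / 2 - (k + 1)), numFactor p r n i / denFactor q s n i) *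
    (numFactor p r n (n / 2 - (k + 1)) / denFactor q s n (n / 2 - (k + 1))) * hchoose

theorem coeff_chebyshev_zero : coeff (-1) 1 (-1) 0 n 0 = 1 := by
  refine coeff_zero _ _ _ _ _ fun i hi => ⟨?_, ?_⟩
  · rw [numFactor_chebyshev]
    have : 0 < n / 2 := by omega
    positivity
  · rw [denFactor_chebyshev]
    positivity

theorem coeff_chebyshev_succ {k : ℕ} (hk : k < n / 2) :
    4 * (k + 1) * (n - k - 1) * coeff (-1) 1 (-1) 0 n (k + 1) =
      -((n - 2 * k) * (n - 2 * k - 1)) * coeff (-1) 1 (-1) 0 n k := by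
  have h := coeff_succ (-1) 1 (-1) 0 n hk
  rw [numFactor_chebyshev, denFactor_chebyshev] at h
  push_cast [Nat.cast_sub hk, Nat.cast_sub hk.le] at h
  have hden : 2 * (((n / 2 : ℕ) : ℝ) - (k + 1) + (n % 2 : ℕ)) + 1 ≠ 0 := by
    have : (k : ℝ) + 1 ≤ (n / 2 : ℕ) := by exact_mod_cast hk
    have : (0 : ℝ) ≤ (n % 2 : ℕ) := by positivity
    linarith
  field_simp at h
  have hn : (n : ℝ) = 2 * (n / 2 : ℕ) + (n % 2 : ℕ) := by
    exact_mod_cast (Nat.div_add_mod n 2).symm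
  have hmod : ((n % 2 : ℕ) : ℝ) * ((n % 2 : ℕ) - 1) = 0 := by
    rcases Nat.mod_two_eq_zero_or_one n with h2 | h2 <;> simp [h2]
  rw [hn]
  linear_combination (-2) * h + coeff (-1) 1 (-1) 0 n k * hmod

theorem two_pow_mul_coeff_chebyshev {k : ℕ} (hk : k ≤ n / 2) :
    2 ^ (n - 1) * coeff (-1) 1 (-1) 0 n k = (Polynomial.Chebyshev.T ℝ n).coeff (n - 2 * k) := by
  induction k with
  | zero =>
    rw [coeff_chebyshev_zero, mul_one, Nat.mul_zero, Nat.sub_zero]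
    simpa [Polynomial.leadingCoeff] using (Polynomial.Chebyshev.leadingCoeff_T ℝ (n : ℤ)).symm
  | succ k ih =>
    have hT := Polynomial.Chebyshev.coeff_T_add_two (R := ℝ) n (n - 2 * (k + 1))
    rw [show n - 2 * (k + 1) + 2 = n - 2 * k by omega, ← ih (by omega)] at hT
    push_cast [Nat.cast_sub (show 2 * (k + 1) ≤ n by omega)] at hT
    have hS := coeff_chebyshev_succ n (k := k) (by omega)
    have hc : (4 * (k + 1) * (n - k - 1) : ℝ) ≠ 0 := by
      have : (k : ℝ) + 2 ≤ n := by exact_mod_cast (show k + 2 ≤ n by omega)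
      have : (0 : ℝ) ≤ k := by positivity
      nlinarith
    apply mul_left_cancel₀ hc
    linear_combination 2 ^ (n - 1) * hS - hT

end Sbar

theorem chebyshevT_eq_Sbar_general (n : ℕ) (x : ℝ) :
    (Polynomial.Chebyshev.T ℝ (n : ℤ)).eval x =
      2 ^ (n - 1) * Sbar (-1) 1 (-1) 0 n x := by
  rw [Polynomial.eval_eq_sum_range_sub_two_mul (by simp)
      (fun _ => Polynomial.Chebyshev.coeff_T_eq_zero_of_odd) x,
    Sbar.eq_sum_coeff, mul_sum]
  refine sum_congr rfl fun k hk => ?_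
  rw [← Sbar.two_pow_mul_coeff_chebyshev n (Nat.lt_succ_iff.1 (mem_range.1 hk)), mul_assoc]

/-- The Chebyshev polynomials of the first kind in terms of the basic class:
`T_n(x) = 2^{n−1} · S̄_n(−1,1,−1,0;x)` for `n ≥ 1`. -/
theorem chebyshevT_eq_Sbar (n : ℕ) (hn : 1 ≤ n) (x : ℝ) :
    (Polynomial.Chebyshev.T ℝ (n : ℤ)).eval x =
      2 ^ (n - 1) * Sbar (-1) 1 (-1) 0 n x :=
  chebyshevT_eq_Sbar_general n x
end

section
/- For every natural number n and every real x, the Chebyshev polynomial of the second kind satisfies U_n(x) = 2^{n} · S̄_n(−1, 1, −3, 0; x). -/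
open Finset Real MeasureTheory

/-!
Expanding the three-term recurrence gives `U_n(x) = ∑ₖ (-1)ᵏ C(n-k, k) (2x)^(n-2k)`. With
`m = ⌊n/2⌋`, the normalizing product of `S̄_n` cancels the first `m - k` factors of the `k`-th
product in `S_n`, leaving the product of the last `k` normalizing factors. For
`(p,q,r,s) = (-1,1,-3,0)` that product, times `4ᵏ C(m, k)`, changes from `k` to `k + 1` by the same
ratio `-(n-2k)(n-2k-1) / ((k+1)(n-k))` as `(-1)ᵏ C(n-k, k)`, so the two agree term by term.
-/

namespace Polynomial.Chebyshev

variable (R : Type*) [CommRing R]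

theorem S_summand_add_two (n k : ℕ) (hk : k ≤ n) :
    (-1 : R[X]) ^ (k + 1) * ((n + 2 - (k + 1)).choose (k + 1) : R[X]) * X ^ (n + 2 - 2 * (k + 1)) =
      X * ((-1) ^ (k + 1) * ((n + 1 - (k + 1)).choose (k + 1) : R[X]) *
        X ^ (n + 1 - 2 * (k + 1))) - (-1) ^ k * ((n - k).choose k : R[X]) * X ^ (n - 2 * k) := by
  have hpascal : (n + 2 - (k + 1)).choose (k + 1) = (n - k).choose k + (n - k).choose (k + 1) := by
    rw [show n + 2 - (k + 1) = n - k + 1 by omega, Nat.choose_succ_succ']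
  -- when `n < 2k + 1` the exponent `n + 1 - 2(k + 1)` is truncated, but the binomial vanishes
  have hshift : X * ((n - k).choose (k + 1) : R[X]) * X ^ (n + 1 - 2 * (k + 1)) =
      ((n - k).choose (k + 1) : R[X]) * X ^ (n - 2 * k) := by
    rcases Nat.lt_or_ge n (2 * k + 1) with h | h
    · simp [Nat.choose_eq_zero_of_lt (show n - k < k + 1 by omega)]
    · rw [show n - 2 * k = n + 1 - 2 * (k + 1) + 1 by omega, pow_succ]; ring
  rw [hpascal, show n + 1 - (k + 1) = n - k by omega, show n + 2 - 2 * (k + 1) = n - 2 * k by omega,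
    Nat.cast_add, pow_succ]
  linear_combination (-1 : R[X]) ^ k * hshift

theorem S_eq_sum_range_succ (n : ℕ) :
    S R n = ∑ k ∈ range (n + 1), (-1) ^ k * ((n - k).choose k : R[X]) * X ^ (n - 2 * k) := by
  induction n using Nat.twoStepInduction with
  | zero => simp
  | one => simp [sum_range_succ]
  | more n ih ih' =>
    push_cast at ih ih' ⊢
    rw [S_add_two, ih, ih', sum_range_succ' _ (n + 1), mul_add, mul_sum]
    conv_rhs => rw [sum_range_succ', sum_range_succ]
    rw [sum_congr rfl fun k hk => S_summand_add_two R n k (Nat.lt_succ_iff.mp (mem_range.mp hk)),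
      sum_sub_distrib]
    simp only [Nat.sub_self, Nat.choose_zero_succ, Nat.choose_zero_right, Nat.cast_zero,
      Nat.cast_one, mul_zero, zero_mul, add_zero, Nat.sub_zero, pow_zero, one_mul]
    ring

theorem S_eq_sum (n : ℕ) :
    S R n = ∑ k ∈ range (n / 2 + 1), (-1) ^ k * ((n - k).choose k : R[X]) * X ^ (n - 2 * k) := by
  rw [S_eq_sum_range_succ]
  refine (sum_subset (range_subset_range.mpr (by omega)) fun k _ hk => ?_).symm
  rw [Nat.choose_eq_zero_of_lt (by simp at hk; omega), Nat.cast_zero, mul_zero, zero_mul]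

theorem U_eq_sum (n : ℕ) :
    U R n = ∑ k ∈ range (n / 2 + 1), (-1) ^ k * ((n - k).choose k : R[X]) * (2 * X) ^ (n - 2 * k) := by
  simp [← S_comp_two_mul_X, S_eq_sum]

end Polynomial.Chebyshev

theorem Nat.choose_mul_sub_mul_sub (N k : ℕ) :
    (N + 1).choose k * (N + 1 - k) * (N - k) = N.choose (k + 1) * (k + 1) * (N + 1) := by
  rw [Nat.choose_succ_right_eq, mul_right_comm (N.choose k), Nat.choose_mul_succ_eq]

theorem Nat.cast_choose_sub_succ_mul {R : Type*} [CommRing R] (n k : ℕ) (h : 2 * k < n) :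
    ((n - (k + 1)).choose (k + 1) : R) * (k + 1) * ((n : R) - k) =
      (n - k).choose k * ((n : R) - 2 * k) * ((n : R) - 2 * k - 1) := by
  obtain ⟨N, rfl⟩ : ∃ N, n = N + 1 + k := ⟨n - k - 1, by omega⟩
  have h' := congrArg (Nat.cast : ℕ → R) (Nat.choose_mul_sub_mul_sub N k)
  push_cast [Nat.cast_sub (show k ≤ N + 1 by omega), Nat.cast_sub (show k ≤ N by omega)] at h'
  rw [show N + 1 + k - (k + 1) = N by omega, show N + 1 + k - k = N + 1 by omega]
  push_cast
  linear_combination -h'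

theorem Finset.prod_range_mul_prod_range_inv {M₀ : Type*} [CommGroupWithZero M₀] {f : ℕ → M₀}
    {j m : ℕ} (hf : ∀ i < m, f i ≠ 0) (hj : j ≤ m) :
    (∏ i ∈ range m, f i) * ∏ i ∈ range j, (f i)⁻¹ = ∏ i ∈ Ico j m, f i := by
  have hne : ∏ i ∈ range j, f i ≠ 0 := prod_ne_zero_iff.mpr fun i hi => hf i (by simp at hi; omega)
  rw [← prod_range_mul_prod_Ico f hj, prod_inv_distrib, mul_right_comm, mul_inv_cancel₀ hne, one_mul]

noncomputable def SbarNormFactor (p q r s : ℝ) (n i : ℕ) : ℝ :=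
  ((2 * (i : ℝ) + (-1 : ℝ) ^ (n + 1) + 2) * q + s) /
    ((2 * (i : ℝ) + (-1 : ℝ) ^ (n + 1) + 2 * ((n / 2 : ℕ) : ℝ)) * p + r)

theorem Sbar_eq_sum (p q r s : ℝ) (n : ℕ) (x : ℝ)
    (hf : ∀ i < n / 2, SbarNormFactor p q r s n i ≠ 0) :
    Sbar p q r s n x = ∑ k ∈ range (n / 2 + 1), (n / 2).choose k *
      (∏ i ∈ Ico (n / 2 - k) (n / 2), SbarNormFactor p q r s n i) * x ^ (n - 2 * k) := by
  have hS : S p q r s n x = ∑ k ∈ range (n / 2 + 1), (n / 2).choose k *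
      (∏ i ∈ range (n / 2 - k), (SbarNormFactor p q r s n i)⁻¹) * x ^ (n - 2 * k) := by
    simp only [S, SbarNormFactor, inv_div]
  have hSbar : Sbar p q r s n x =
      (∏ i ∈ range (n / 2), SbarNormFactor p q r s n i) * S p q r s n x := rfl
  rw [hSbar, hS, mul_sum]
  refine sum_congr rfl fun k _ => ?_
  rw [← prod_range_mul_prod_range_inv hf (Nat.sub_le _ _)]
  ring

theorem SbarNormFactor_chebyshevU (n i : ℕ) :
    SbarNormFactor (-1) 1 (-3) 0 n i =
      -(2 * i + 2 * (n % 2 : ℕ) + 1) / (2 * (i + (n / 2 : ℕ) + (n % 2 : ℕ) + 1)) := by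
  rw [SbarNormFactor, neg_one_pow_succ_eq_two_mul_mod_two_sub_one, neg_div, ← div_neg]
  congr 1 <;> ring

theorem SbarNormFactor_chebyshevU_ne_zero (n i : ℕ) : SbarNormFactor (-1) 1 (-3) 0 n i ≠ 0 := by
  rw [SbarNormFactor_chebyshevU, neg_div, neg_ne_zero]
  positivity

theorem SbarNormFactor_chebyshevU_sub_succ_mul (n k : ℕ) (hk : k < n / 2) :
    SbarNormFactor (-1) 1 (-3) 0 n (n / 2 - (k + 1)) * (4 * (((n / 2 : ℕ) : ℝ) - k) * ((n : ℝ) - k)) =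
      -(((n : ℝ) - 2 * k) * ((n : ℝ) - 2 * k - 1)) := by
  set m := n / 2
  have hn : (n : ℝ) = 2 * m + (n % 2 : ℕ) := by exact_mod_cast (Nat.div_add_mod n 2).symm
  have hmod : ((n % 2 : ℕ) : ℝ) * (n % 2 : ℕ) = (n % 2 : ℕ) := by
    rcases Nat.mod_two_eq_zero_or_one n with h | h <;> simp [h]
  have hden : 2 * (((m - (k + 1) : ℕ) : ℝ) + m + (n % 2 : ℕ) + 1) ≠ 0 := by positivity
  rw [SbarNormFactor_chebyshevU, div_mul_eq_mul_div, div_eq_iff hden, Nat.cast_sub (by omega), hn]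
  push_cast
  linear_combination (4 * (m : ℝ) - 2 * k + 2 * (n % 2 : ℕ)) * hmod

theorem four_pow_mul_choose_mul_prod_SbarNormFactor_chebyshevU (n k : ℕ) (hk : k ≤ n / 2) :
    4 ^ k * (n / 2).choose k * ∏ i ∈ Ico (n / 2 - k) (n / 2), SbarNormFactor (-1) 1 (-3) 0 n i =
      (-1) ^ k * (n - k).choose k := by
  induction k with
  | zero => simp
  | succ k ih =>
    set m := n / 2
    have hkm : k < m := hk
    have hchoose_m : (m.choose (k + 1) : ℝ) * (k + 1) = m.choose k * ((m : ℝ) - k) := by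
      rw [← Nat.cast_sub hkm.le]; exact_mod_cast Nat.choose_succ_right_eq m k
    have hchoose_n := Nat.cast_choose_sub_succ_mul (R := ℝ) n k (by omega)
    have hF := SbarNormFactor_chebyshevU_sub_succ_mul n k hkm
    have hnk : ((k : ℝ) + 1) * ((n : ℝ) - k) ≠ 0 := by
      have : (k : ℝ) < n := by exact_mod_cast (show k < n by omega)
      exact mul_ne_zero (by positivity) (sub_ne_zero.mpr this.ne')
    rw [prod_eq_prod_Ico_succ_bot (by omega), show m - (k + 1) + 1 = m - k by omega]
    refine mul_right_cancel₀ hnk ?_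
    set F := SbarNormFactor (-1) 1 (-3) 0 n (m - (k + 1))
    set P := ∏ i ∈ Ico (m - k) m, SbarNormFactor (-1) 1 (-3) 0 n i
    linear_combination (4 ^ (k + 1) * F * P * ((n : ℝ) - k)) * hchoose_m
      + (F * 4 * ((m : ℝ) - k) * ((n : ℝ) - k)) * ih hkm.le
      + ((-1) ^ k * ((n - k).choose k : ℝ)) * hF - (-1) ^ (k + 1) * hchoose_n

/-- The Chebyshev polynomials of the second kind in terms of the basic class:
`U_n(x) = 2^n · S̄_n(−1,1,−3,0;x)`. -/
theorem chebyshevU_eq_Sbar (n : ℕ) (x : ℝ) :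
    (Polynomial.Chebyshev.U ℝ (n : ℤ)).eval x =
      2 ^ n * Sbar (-1) 1 (-3) 0 n x := by
  rw [Polynomial.Chebyshev.U_eq_sum, Polynomial.eval_finsetSum,
    Sbar_eq_sum _ _ _ _ _ _ fun i _ => SbarNormFactor_chebyshevU_ne_zero n i, mul_sum]
  refine sum_congr rfl fun k hk => ?_
  have hk : k ≤ n / 2 := Nat.lt_succ_iff.mp (mem_range.mp hk)
  have hpow : (2 : ℝ) ^ n = 4 ^ k * 2 ^ (n - 2 * k) := by
    rw [show (4 : ℝ) = 2 ^ 2 by norm_num, ← pow_mul, ← pow_add]; congr 1; omega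
  simp only [Polynomial.eval_mul, Polynomial.eval_pow, Polynomial.eval_neg, Polynomial.eval_one,
    Polynomial.eval_natCast, Polynomial.eval_ofNat, Polynomial.eval_X]
  rw [← four_pow_mul_choose_mul_prod_SbarNormFactor_chebyshevU n k hk, hpow, mul_pow]
  ring
end
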